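/- Let q > 1, α ∈ [0,1], k ≥ 2, 1 ≤ j ≤ k-1, and 0 ≤ i < j-1. Then lim_{n→∞} a_{n,q}(k-j, k-i)/(λ_{k,q}^{(α,n)} - λ_{k-j,q}^{(α,n)}) = 0. -/

import Mathlib

/-!
Put `u = 1/[n]_q`. Clearing the q-factorials, `λ_{k,q}^{(α,n)}` becomes a fixed rational
function of `u` equal to `1` at `u = 0`, so `[n]_q (λ_k - λ_{k-j})` tends to the difference of
its derivatives at `0`; these derivatives are strictly decreasing in `k`, hence the limit is
nonzero. The same manipulation shows `a_{n,q}(r, K) = O([n]_q^{r-K})`, and here `K - r ≥ 2`, so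
`[n]_q a_{n,q}(k-j, k-i) → 0`.
-/

open Finset Filter Topology

/-- The q-integer `[m]_q = 1 + q + ... + q^{m-1}`, with `[0]_q = 0`. -/
noncomputable def qInt (q : ℝ) (m : ℕ) : ℝ := ∑ i ∈ Finset.range m, q ^ i

/-- The q-factorial `[n]_q! = [1]_q [2]_q ⋯ [n]_q`. -/
noncomputable def qFact (q : ℝ) (n : ℕ) : ℝ := ∏ i ∈ Finset.range n, qInt q (i + 1)

/-- The q-binomial coefficient `[n]_q!/([k]_q! [n-k]_q!)` (zero if `k > n`). -/
noncomputable def qBinom (q : ℝ) (n k : ℕ) : ℝ :=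
  if k ≤ n then qFact q n / (qFact q k * qFact q (n - k)) else 0

/-- The q-Stirling number of the second kind. -/
noncomputable def qStirling (q : ℝ) (k r : ℕ) : ℝ :=
  (1 / (qFact q r * q ^ (r * (r - 1) / 2))) *
    ∑ i ∈ Finset.range (r + 1),
      (-1 : ℝ) ^ i * q ^ (i * (i - 1) / 2) * qBinom q r i * (qInt q (r - i)) ^ k

/-- The q-forward difference operator on sequences:
`Δ_q^0 f_i = f_i`, `Δ_q^{r+1} f_i = Δ_q^r f_{i+1} - q^r Δ_q^r f_i`. -/
noncomputable def qDiff (q : ℝ) : ℕ → (ℕ → ℝ) → ℕ → ℝ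
  | 0, f, i => f i
  | r + 1, f, i => qDiff q r f (i + 1) - q ^ r * qDiff q r f i

/-- The eigenvalues `λ_{k,q}^{(α,n)}` of the (α,q)-Bernstein operator. -/
noncomputable def lamEig (q α : ℝ) (n k : ℕ) : ℝ :=
  q ^ (k * (k - 1) / 2) * qFact q (n - 2) / (qFact q (n - k) * (qInt q n) ^ k) *
    ((1 - α) * qInt q (n - k) * qInt q (n - 1 + k) + α * qInt q n * qInt q (n - 1))

/-- The coefficients `a_{n,q}(r,k)` of `T_{n,q,α}(t^k; x) = Σ_r a_{n,q}(r,k) x^r`. -/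
noncomputable def aCoef (q α : ℝ) (n r k : ℕ) : ℝ :=
  q ^ (r * (r - 1) / 2) * qFact q (n - 2) / ((qInt q n) ^ k * qFact q (n - r)) *
    ((1 - α) * qInt q (n - r) *
        (qInt q (n + r - 1) * qStirling q (k + 1) (r + 1) -
          qInt q (r + 1) * qInt q (n - 1) * qStirling q k (r + 1)) +
      α * qInt q n * qInt q (n - 1) * qStirling q k r)

/-- The (α,q)-Bernstein operator, via its forward-difference representation
`T_{n,q,α}(f;x) = Σ_{r=0}^n ((1-α) C_q(n-1,r) Δ_q^r g_0 + α C_q(n,r) Δ_q^r f_0) x^r`,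
where `f_i = f([i]_q/[n]_q)` and
`g_i = (1 - q^{n-i-1}[i]_q/[n-1]_q) f_i + (q^{n-i-1}[i]_q/[n-1]_q) f_{i+1}`. -/
noncomputable def Talpha (q α : ℝ) (n : ℕ) (f : ℝ → ℝ) (x : ℝ) : ℝ :=
  let fs : ℕ → ℝ := fun i => f (qInt q i / qInt q n)
  let gs : ℕ → ℝ := fun i =>
    (1 - q ^ (n - i - 1) * qInt q i / qInt q (n - 1)) * fs i +
      (q ^ (n - i - 1) * qInt q i / qInt q (n - 1)) * fs (i + 1)
  ∑ r ∈ Finset.range (n + 1),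
    ((1 - α) * qBinom q (n - 1) r * qDiff q r gs 0 + α * qBinom q n r * qDiff q r fs 0) * x ^ r

section QInt

variable {q : ℝ}

lemma qInt_succ (m : ℕ) : qInt q (m + 1) = qInt q m + q ^ m :=
  Finset.sum_range_succ _ _

lemma qInt_add (a b : ℕ) : qInt q (a + b) = qInt q a + q ^ a * qInt q b := by
  simp only [qInt, Finset.sum_range_add, Finset.mul_sum, pow_add]

lemma qInt_sub {s n : ℕ} (h : s ≤ n) : q ^ s * qInt q (n - s) = qInt q n - qInt q s := by
  rw [eq_sub_iff_add_eq', ← qInt_add, Nat.add_sub_cancel' h]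

lemma qInt_nonneg (hq : 0 ≤ q) (m : ℕ) : 0 ≤ qInt q m :=
  Finset.sum_nonneg fun i _ => pow_nonneg hq i

lemma qInt_pos (hq : 0 ≤ q) {m : ℕ} (hm : m ≠ 0) : 0 < qInt q m :=
  Finset.sum_pos' (fun i _ => pow_nonneg hq i) ⟨0, by simp [Nat.pos_of_ne_zero hm]⟩

lemma natCast_le_qInt (hq : 1 ≤ q) (m : ℕ) : (m : ℝ) ≤ qInt q m := by
  simpa [qInt] using Finset.card_nsmul_le_sum (range m) (q ^ ·) 1 fun i _ => one_le_pow₀ hq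

lemma tendsto_qInt_atTop (hq : 1 ≤ q) : Tendsto (qInt q) atTop atTop :=
  tendsto_atTop_mono (natCast_le_qInt hq) tendsto_natCast_atTop_atTop

lemma tendsto_qInt_sub_div_qInt (hq : 1 ≤ q) (s : ℕ) :
    Tendsto (fun n => qInt q (n - s) / qInt q n) atTop (𝓝 (q ^ s)⁻¹) := by
  have hqs : q ^ s ≠ 0 := by positivity
  have h := ((tendsto_qInt_atTop hq).inv_tendsto_atTop.const_mul (qInt q s)).const_sub 1
  rw [mul_zero, sub_zero] at h
  refine (one_div (q ^ s) ▸ h.div_const (q ^ s)).congr' ?_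
  filter_upwards [eventually_ge_atTop (max s 1)] with n hn
  have hn0 : qInt q n ≠ 0 := (qInt_pos (by linarith) (by omega)).ne'
  rw [Pi.inv_apply, div_eq_div_iff hqs hn0, mul_comm (qInt q (n - s)), qInt_sub (by omega)]
  field_simp

lemma tendsto_qInt_add_div_qInt (hq : 1 ≤ q) (s : ℕ) :
    Tendsto (fun n => qInt q (n + s) / qInt q n) atTop (𝓝 (q ^ s)) := by
  have h := ((tendsto_qInt_atTop hq).inv_tendsto_atTop.const_mul (qInt q s)).add_const (q ^ s)
  rw [mul_zero, zero_add] at h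
  refine h.congr' ?_
  filter_upwards [eventually_ge_atTop 1] with n hn
  have hn0 : qInt q n ≠ 0 := (qInt_pos (by linarith) (by omega)).ne'
  rw [add_comm n, qInt_add, Pi.inv_apply]
  field_simp

lemma qFact_pos (hq : 0 ≤ q) (n : ℕ) : 0 < qFact q n :=
  Finset.prod_pos fun i _ => qInt_pos hq i.succ_ne_zero

lemma qFact_sub_mul_prod {r n : ℕ} (h : r ≤ n) :
    qFact q (n - r) * ∏ t ∈ range r, qInt q (n - t) = qFact q n := by
  induction r with
  | zero => simp
  | succ r ih =>
    rw [Finset.prod_range_succ, ← ih (by omega), show n - r = n - (r + 1) + 1 by omega, qFact,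
      qFact, Finset.prod_range_succ]
    ring

lemma pow_mul_qFact_div_qFact_mul_pow (hq : 0 < q) {r n : ℕ} (hr : r ≤ n) (hn : 2 ≤ n) :
    q ^ (r * (r - 1) / 2) * qFact q (n - 2) / (qFact q (n - r) * qInt q n ^ r) =
      (∏ t ∈ range r, (1 - qInt q t * (qInt q n)⁻¹)) / (qInt q (n - 1) * qInt q n) := by
  have hN : qInt q n ≠ 0 := (qInt_pos hq.le (by omega)).ne'
  have hN1 : qInt q (n - 1) ≠ 0 := (qInt_pos hq.le (by omega)).ne'
  have hFr : qFact q (n - r) ≠ 0 := (qFact_pos hq.le _).ne'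
  have hfact : qFact q (n - 2) * (qInt q n * qInt q (n - 1)) =
      qFact q (n - r) * ∏ t ∈ range r, qInt q (n - t) := by
    rw [qFact_sub_mul_prod hr, ← qFact_sub_mul_prod hn]
    simp [Finset.prod_range_succ]
  have hprod : q ^ (r * (r - 1) / 2) * ∏ t ∈ range r, qInt q (n - t) =
      qInt q n ^ r * ∏ t ∈ range r, (1 - qInt q t * (qInt q n)⁻¹) := by
    rw [← Finset.sum_range_id, ← Finset.prod_pow_eq_pow_sum, ← Finset.prod_mul_distrib,
      ← Finset.card_range r, ← Finset.prod_const, Finset.card_range, ← Finset.prod_mul_distrib]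
    refine Finset.prod_congr rfl fun t ht => ?_
    rw [qInt_sub (by simp at ht; omega)]
    field_simp
  rw [div_eq_div_iff (by positivity) (by positivity)]
  linear_combination q ^ (r * (r - 1) / 2) * hfact + qFact q (n - r) * hprod

end QInt

noncomputable def lamFun (q α : ℝ) (k : ℕ) (u : ℝ) : ℝ :=
  (∏ t ∈ range k, (1 - qInt q t * u)) *
    ((1 - α) * (1 - qInt q k * u) * (1 + qInt q (k - 1) / q ^ (k - 1) * u) / (1 - u) + α)

noncomputable def lamSlope (q α : ℝ) (k : ℕ) : ℝ :=
  (1 - α) * (1 + qInt q (k - 1) / q ^ (k - 1) - qInt q k) - ∑ t ∈ range k, qInt q t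

section Eigenvalues

variable {q : ℝ} (α : ℝ) {k : ℕ}

lemma lamEig_eq_lamFun (hq : 0 < q) (hk : 1 ≤ k) {n : ℕ} (hkn : k ≤ n) (hn : 2 ≤ n) :
    lamEig q α n k = lamFun q α k (qInt q n)⁻¹ := by
  have hN : qInt q n ≠ 0 := (qInt_pos hq.le (by omega)).ne'
  have hpred : qInt q (n - 1) = (qInt q n - 1) / q := by
    rw [eq_div_iff hq.ne', mul_comm]
    simpa [qInt] using qInt_sub (q := q) (s := 1) (by omega)
  have hN1 : qInt q n - 1 ≠ 0 :=
    ((div_pos_iff_of_pos_right hq).1 (hpred ▸ qInt_pos hq.le (by omega))).ne'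
  have hsubk : qInt q (n - k) = (qInt q n - qInt q k) / (q ^ (k - 1) * q) := by
    rw [← pow_succ, Nat.sub_add_cancel hk, eq_div_iff (by positivity), mul_comm, qInt_sub hkn]
  have hadd : qInt q (n - 1 + k) = qInt q (k - 1) + q ^ (k - 1) * qInt q n := by
    rw [show n - 1 + k = k - 1 + n by omega, qInt_add]
  rw [lamEig, pow_mul_qFact_div_qFact_mul_pow hq hkn hn, lamFun, hpred, hsubk, hadd]
  field_simp
  ring

lemma lamFun_zero : lamFun q α k 0 = 1 := by
  simp [lamFun]

lemma hasDerivAt_lamFun : HasDerivAt (lamFun q α k) (lamSlope q α k) 0 := by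
  have hprod : HasDerivAt (fun u => ∏ t ∈ range k, (1 - qInt q t * u))
      (-∑ t ∈ range k, qInt q t) 0 := by
    simpa using HasDerivAt.fun_finsetProd (u := range k) (x := (0 : ℝ))
      fun t _ => ((hasDerivAt_id (0 : ℝ)).const_mul (qInt q t)).const_sub 1
  have hsub (c : ℝ) : HasDerivAt (fun u : ℝ => 1 - c * u) (-c) 0 := by
    simpa using ((hasDerivAt_id (0 : ℝ)).const_mul c).const_sub 1
  have hadd (c : ℝ) : HasDerivAt (fun u : ℝ => 1 + c * u) c 0 := by
    simpa using ((hasDerivAt_id (0 : ℝ)).const_mul c).const_add 1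
  have hquot := ((((hsub (qInt q k)).const_mul (1 - α)).fun_mul
    (hadd (qInt q (k - 1) / q ^ (k - 1)))).fun_div (by simpa using hsub 1) (by norm_num)).add_const α
  refine (hprod.fun_mul hquot).congr_deriv ?_
  simp [lamSlope]
  ring

lemma tendsto_qInt_mul_lamEig_sub_one (hq : 1 ≤ q) (hk : 1 ≤ k) :
    Tendsto (fun n => qInt q n * (lamEig q α n k - 1)) atTop (𝓝 (lamSlope q α k)) := by
  have hu : Tendsto (fun n => (qInt q n)⁻¹) atTop (𝓝[≠] 0) :=
    tendsto_nhdsWithin_of_tendsto_nhds_of_eventually_within _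
      (tendsto_qInt_atTop hq).inv_tendsto_atTop
      (eventually_ge_atTop 1 |>.mono fun n hn => inv_ne_zero (qInt_pos (by linarith) (by omega)).ne')
  refine ((hasDerivAt_lamFun α).tendsto_slope_zero.comp hu).congr' ?_
  filter_upwards [eventually_ge_atTop (max k 2)] with n hn
  simp [lamEig_eq_lamFun α (by linarith) hk (le_of_max_le_left hn) (le_of_max_le_right hn),
    lamFun_zero]

lemma antitone_qInt_pred_div_pow_sub_qInt (hq : 1 ≤ q) :
    Antitone fun m => qInt q (m - 1) / q ^ (m - 1) - qInt q m := by
  refine antitone_nat_of_succ_le fun m => ?_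
  cases m with
  | zero => simp [qInt]
  | succ m =>
    have hpow : 1 ≤ q ^ (m + 1) := one_le_pow₀ hq
    have hstep : qInt q (m + 1) / q ^ (m + 1) = 1 / q ^ (m + 1) + qInt q m / q ^ m := by
      rw [add_comm m 1, qInt_add, pow_succ']
      field_simp
      simp [qInt]
      ring
    simp only [Nat.add_sub_cancel, hstep, qInt_succ (m + 1)]
    linarith [(div_le_one (by positivity)).2 hpow]

lemma lamSlope_lt_lamSlope (hq : 1 ≤ q) (hα : α ≤ 1) {r : ℕ} (hr : 1 ≤ r) (hrk : r < k) :
    lamSlope q α k < lamSlope q α r := by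
  have hX := antitone_qInt_pred_div_pow_sub_qInt hq hrk.le
  have hS : ∑ t ∈ range r, qInt q t < ∑ t ∈ range k, qInt q t :=
    Finset.sum_lt_sum_of_subset (range_subset_range.2 hrk.le) (mem_range.2 hrk) (by simp)
      (qInt_pos (by linarith) (by omega)) fun t _ _ => qInt_nonneg (by linarith) t
  simp only [lamSlope]
  linarith [mul_le_mul_of_nonneg_left hX (sub_nonneg.2 hα)]

end Eigenvalues

section Coefficients

variable {q : ℝ} (α : ℝ) {r K : ℕ}

lemma qInt_pow_mul_aCoef_eq (hq : 0 < q) (hrK : r ≤ K) {n : ℕ} (hrn : r ≤ n) (hn : 2 ≤ n) :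
    qInt q n ^ (K - r) * aCoef q α n r K =
      (∏ t ∈ range r, (1 - qInt q t * (qInt q n)⁻¹)) *
        ((1 - α) * (qInt q (n - r) / qInt q n) *
            (qInt q (n + r - 1) / qInt q n * qStirling q (K + 1) (r + 1) -
              qInt q (r + 1) * (qInt q (n - 1) / qInt q n) * qStirling q K (r + 1)) *
            (qInt q n / qInt q (n - 1)) +
          α * qStirling q K r) := by
  have hN : qInt q n ≠ 0 := (qInt_pos hq.le (by omega)).ne'
  have hN1 : qInt q (n - 1) ≠ 0 := (qInt_pos hq.le (by omega)).ne'
  have hpow : qInt q n ^ K = qInt q n ^ (K - r) * qInt q n ^ r := by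
    rw [← pow_add, Nat.sub_add_cancel hrK]
  have hscale : qInt q n ^ (K - r) *
      (q ^ (r * (r - 1) / 2) * qFact q (n - 2) / (qInt q n ^ K * qFact q (n - r))) =
      q ^ (r * (r - 1) / 2) * qFact q (n - 2) / (qFact q (n - r) * qInt q n ^ r) := by
    have hFr : qFact q (n - r) ≠ 0 := (qFact_pos hq.le _).ne'
    rw [hpow]
    field_simp
  rw [aCoef, ← mul_assoc, hscale, pow_mul_qFact_div_qFact_mul_pow hq hrn hn]
  field_simp

lemma tendsto_qInt_pow_mul_aCoef (hq : 1 ≤ q) (hr : 1 ≤ r) (hrK : r ≤ K) :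
    Tendsto (fun n => qInt q n ^ (K - r) * aCoef q α n r K) atTop
      (𝓝 ((1 - α) * (qStirling q (K + 1) (r + 1) -
          qInt q (r + 1) * qStirling q K (r + 1) / q ^ r) + α * qStirling q K r)) := by
  have hq0 : q ≠ 0 := by positivity
  have hprod : Tendsto (fun n => ∏ t ∈ range r, (1 - qInt q t * (qInt q n)⁻¹)) atTop (𝓝 1) := by
    simpa using tendsto_finsetProd (range r) fun t _ =>
      ((tendsto_qInt_atTop hq).inv_tendsto_atTop.const_mul (qInt q t)).const_sub 1
  have hshift : Tendsto (fun n => qInt q (n + r - 1) / qInt q n) atTop (𝓝 (q ^ (r - 1))) := by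
    simpa only [Nat.add_sub_assoc hr] using tendsto_qInt_add_div_qInt hq (r - 1)
  have hpred := tendsto_qInt_sub_div_qInt hq 1
  have hbracket := (((tendsto_const_nhds (x := 1 - α)).mul (tendsto_qInt_sub_div_qInt hq r)).mul
    ((hshift.mul_const (qStirling q (K + 1) (r + 1))).sub
      (((tendsto_const_nhds (x := qInt q (r + 1))).mul hpred).mul_const
        (qStirling q K (r + 1))))).mul (hpred.inv₀ (by positivity))
  have hlim := hprod.mul (hbracket.add_const (α * qStirling q K r))
  convert hlim.congr' ?_ using 2
  · rw [show q ^ r = q ^ (r - 1) * q by rw [← pow_succ, Nat.sub_add_cancel hr]]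
    field_simp
  · filter_upwards [eventually_ge_atTop (max r 2)] with n hn
    simp only [qInt_pow_mul_aCoef_eq α (by linarith) hrK (le_of_max_le_left hn)
      (le_of_max_le_right hn), inv_div]

lemma tendsto_qInt_mul_aCoef (hq : 1 ≤ q) (hr : 1 ≤ r) (hrK : r + 2 ≤ K) :
    Tendsto (fun n => qInt q n * aCoef q α n r K) atTop (𝓝 0) := by
  have hdecay : Tendsto (fun n => (qInt q n ^ (K - r - 1))⁻¹) atTop (𝓝 0) :=
    ((tendsto_pow_atTop (n := K - r - 1) (by omega)).comp (tendsto_qInt_atTop hq)).inv_tendsto_atTop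
  have h := (tendsto_qInt_pow_mul_aCoef α hq hr (by omega : r ≤ K)).mul hdecay
  rw [mul_zero] at h
  refine h.congr' ?_
  filter_upwards [eventually_ge_atTop 1] with n hn
  have hN : qInt q n ≠ 0 := (qInt_pos (by linarith) (by omega)).ne'
  rw [← pow_sub_one_mul (by omega : K - r ≠ 0)]
  field_simp

end Coefficients

theorem ratio_limit_zero_general (q α : ℝ) (hq : 1 < q) (hα : α ∈ Set.Icc (0 : ℝ) 1)
    (k j i : ℕ) (hj1 : 1 ≤ j) (hj : j ≤ k - 1) (hi : i < j - 1) :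
    Filter.Tendsto
      (fun n : ℕ => aCoef q α n (k - j) (k - i) / (lamEig q α n k - lamEig q α n (k - j)))
      Filter.atTop (nhds 0) := by
  have hnum := tendsto_qInt_mul_aCoef α hq.le (by omega : 1 ≤ k - j) (by omega : k - j + 2 ≤ k - i)
  have hden := (tendsto_qInt_mul_lamEig_sub_one α hq.le (by omega : 1 ≤ k)).sub
    (tendsto_qInt_mul_lamEig_sub_one α hq.le (by omega : 1 ≤ k - j))
  have hslope := lamSlope_lt_lamSlope α hq.le hα.2 (by omega : 1 ≤ k - j) (by omega : k - j < k)
  have hlim := hnum.div hden (sub_ne_zero.2 hslope.ne)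
  rw [zero_div] at hlim
  refine hlim.congr' ?_
  filter_upwards [eventually_ge_atTop 1] with n hn
  have hN : qInt q n ≠ 0 := (qInt_pos (by linarith) (by omega)).ne'
  rw [Pi.div_apply, ← mul_sub, sub_sub_sub_cancel_right, mul_div_mul_left _ _ hN]

theorem ratio_limit_zero (q α : ℝ) (hq : 1 < q) (hα : α ∈ Set.Icc (0 : ℝ) 1)
    (k j i : ℕ) (hk : 2 ≤ k) (hj1 : 1 ≤ j) (hj : j ≤ k - 1) (hi : i < j - 1) :
    Filter.Tendsto
      (fun n : ℕ => aCoef q α n (k - j) (k - i) / (lamEig q α n k - lamEig q α n (k - j)))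
      Filter.atTop (nhds 0) :=
  ratio_limit_zero_general q α hq hα k j i hj1 hj hi
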